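/- arXiv:2004.06232 — 2 statements merged into one kernel-verified Lean document; each statement's English description precedes it below -/
import Mathlib

section
/- For every positive integer m ≥ 2, the m-fold integral over the unit cube (0,1)^m of 1/(1 + x₁x₂⋯x_m) equals (1 − 2^{1−m})·ζ(m). -/
/-!
Expanding `1 / (1 + t) = ∑ (-t)ⁿ` at `t = x₁⋯x_m` and integrating term by term gives
`∫ (x₁⋯x_m)ⁿ = (n + 1)⁻ᵐ`, so the integral is the alternating series `η(m) = ∑ (-1)ⁿ (n + 1)⁻ᵐ`;
the interchange is justified because `∑ (n + 1)⁻ᵐ` converges for `m ≥ 2`. Subtracting twice the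
even-denominator terms `∑ (2k + 2)⁻ᵐ = 2⁻ᵐ ζ(m)` from `ζ(m)` turns `η(m)` into `(1 - 2¹⁻ᵐ) ζ(m)`.
-/

open MeasureTheory Set

theorem Real.summable_one_div_nat_add_one_pow {p : ℕ} :
    Summable (fun n : ℕ ↦ 1 / ((n : ℝ) + 1) ^ p) ↔ 1 < p := by
  simpa using (summable_nat_add_iff (f := fun n : ℕ ↦ 1 / (n : ℝ) ^ p) 1).trans
    Real.summable_one_div_nat_pow

section Cube

variable {ι E : Type*} [Fintype ι] [MeasureSpace E] [SigmaFinite (volume : Measure E)]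

theorem setIntegral_univ_pi_prod_eq_pow (g : E → ℝ) (s : Set E) :
    ∫ x in univ.pi (fun _ : ι ↦ s), ∏ i, g (x i) = (∫ t in s, g t) ^ Fintype.card ι := by
  rw [volume_pi, Measure.restrict_pi_pi, integral_fintype_prod_eq_pow]

theorem MeasureTheory.IntegrableOn.univ_pi_prod {g : E → ℝ} {s : Set E} (hg : IntegrableOn g s) :
    IntegrableOn (fun x ↦ ∏ i, g (x i)) (univ.pi fun _ : ι ↦ s) := by
  rw [IntegrableOn, volume_pi, Measure.restrict_pi_pi]
  exact Integrable.fintype_prod fun _ ↦ hg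

end Cube

theorem setIntegral_Ioo_zero_one_pow (n : ℕ) : ∫ x in Ioo (0 : ℝ) 1, x ^ n = 1 / (n + 1) := by
  rw [← integral_Ioc_eq_integral_Ioo, ← intervalIntegral.integral_of_le zero_le_one,
    integral_pow]
  simp

theorem setIntegral_Ioo_zero_one_norm_pow (n : ℕ) :
    ∫ x in Ioo (0 : ℝ) 1, ‖x‖ ^ n = 1 / (n + 1) := by
  rw [← setIntegral_Ioo_zero_one_pow]
  exact setIntegral_congr_fun measurableSet_Ioo fun x hx ↦ by rw [Real.norm_of_nonneg hx.1.le]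

section UnitCube

variable {ι : Type*} [Fintype ι]

theorem prod_mem_Ioo_of_mem_univ_pi [Nonempty ι] {x : ι → ℝ}
    (hx : x ∈ univ.pi fun _ ↦ Ioo (0 : ℝ) 1) : ∏ i, x i ∈ Ioo (0 : ℝ) 1 := by
  simp only [mem_univ_pi, mem_Ioo] at hx
  refine ⟨Finset.prod_pos fun i _ ↦ (hx i).1, ?_⟩
  calc ∏ i, x i < ∏ _i : ι, (1 : ℝ) :=
        Finset.prod_lt_prod_of_nonempty (fun i _ ↦ (hx i).1) (fun i _ ↦ (hx i).2)
          Finset.univ_nonempty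
    _ = 1 := Finset.prod_const_one

theorem one_div_one_add_prod_eq_tsum [Nonempty ι] {x : ι → ℝ}
    (hx : x ∈ univ.pi fun _ ↦ Ioo (0 : ℝ) 1) :
    1 / (1 + ∏ i, x i) = ∑' n : ℕ, (-1) ^ n * ∏ i, x i ^ n := by
  obtain ⟨hpos, hlt⟩ := prod_mem_Ioo_of_mem_univ_pi hx
  simp_rw [Finset.prod_pow, ← mul_pow, neg_one_mul]
  rw [tsum_geometric_of_abs_lt_one (abs_lt.mpr ⟨by linarith, by linarith⟩), sub_neg_eq_add,
    one_div]

theorem hasSum_setIntegral_neg_one_pow_mul_prod_pow (hι : 2 ≤ Fintype.card ι) :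
    HasSum (fun n : ℕ ↦ (-1) ^ n / ((n : ℝ) + 1) ^ Fintype.card ι)
      (∫ x in univ.pi (fun _ : ι ↦ Ioo (0 : ℝ) 1), ∑' n : ℕ, (-1) ^ n * ∏ i, x i ^ n) := by
  have hint (n : ℕ) : IntegrableOn (fun x : ℝ ↦ x ^ n) (Ioo 0 1) :=
    (continuous_pow n).integrableOn_Icc.mono_set Ioo_subset_Icc_self
  have hval (n : ℕ) : ∫ x in univ.pi (fun _ : ι ↦ Ioo (0 : ℝ) 1), (-1) ^ n * ∏ i, x i ^ n
      = (-1) ^ n / ((n : ℝ) + 1) ^ Fintype.card ι := by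
    rw [integral_const_mul, setIntegral_univ_pi_prod_eq_pow (fun t ↦ t ^ n),
      setIntegral_Ioo_zero_one_pow, div_pow, one_pow, mul_one_div]
  have hnorm (n : ℕ) : ∫ x in univ.pi (fun _ : ι ↦ Ioo (0 : ℝ) 1), ‖(-1) ^ n * ∏ i, x i ^ n‖
      = 1 / ((n : ℝ) + 1) ^ Fintype.card ι := by
    simp only [norm_mul, norm_pow, norm_neg, norm_one, one_pow, one_mul, norm_prod]
    rw [setIntegral_univ_pi_prod_eq_pow (fun t ↦ ‖t‖ ^ n), setIntegral_Ioo_zero_one_norm_pow,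
      div_pow, one_pow]
  simpa only [hval] using hasSum_integral_of_summable_integral_norm
    (fun n ↦ ((hint n).univ_pi_prod (ι := ι)).const_mul ((-1) ^ n))
    (by simpa only [hnorm] using Real.summable_one_div_nat_add_one_pow.mpr hι)

end UnitCube

theorem tsum_neg_one_pow_mul_eq_sub {f : ℕ → ℝ} (hf : Summable f) :
    ∑' n, (-1) ^ n * f n = ∑' n, f n - 2 * ∑' k, f (2 * k + 1) := by
  have hev : Summable fun k ↦ f (2 * k) := hf.comp_injective (mul_right_injective₀ two_ne_zero)
  have hodd : Summable fun k ↦ f (2 * k + 1) :=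
    hf.comp_injective ((add_left_injective 1).comp (mul_right_injective₀ two_ne_zero))
  rw [← tsum_even_add_odd hev hodd,
    ← tsum_even_add_odd (f := fun n ↦ (-1) ^ n * f n) (by simpa [pow_mul] using hev)
      (by simpa [pow_succ, pow_mul] using hodd.neg)]
  simp only [pow_mul, pow_succ, pow_zero, mul_neg, mul_one, neg_neg, one_pow, one_mul, neg_mul,
    tsum_neg]
  ring

theorem tsum_neg_one_pow_div_nat_add_one_pow {m : ℕ} (hm : 2 ≤ m) :
    ∑' n : ℕ, (-1) ^ n / ((n : ℝ) + 1) ^ m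
      = (1 - 2 ^ ((1 : ℝ) - m)) * ∑' n : ℕ, 1 / ((n : ℝ) + 1) ^ m := by
  have hodd (k : ℕ) :
      1 / (((2 * k + 1 : ℕ) : ℝ) + 1) ^ m = 2⁻¹ ^ m * (1 / ((k : ℝ) + 1) ^ m) := by
    push_cast
    rw [show (2 * (k : ℝ) + 1 + 1) = 2 * (k + 1) by ring, mul_pow, inv_pow]
    field_simp
  have htwo : (2 : ℝ) ^ ((1 : ℝ) - m) = 2 * 2⁻¹ ^ m := by
    rw [Real.rpow_sub two_pos, Real.rpow_one, Real.rpow_natCast, inv_pow, div_eq_mul_inv]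
  simp_rw [div_eq_mul_one_div ((-1 : ℝ) ^ _)]
  rw [tsum_neg_one_pow_mul_eq_sub (Real.summable_one_div_nat_add_one_pow.mpr hm)]
  simp_rw [hodd]
  rw [tsum_mul_left, htwo]
  ring

theorem cube_integral_eta (m : ℕ) (hm : 2 ≤ m) :
    (∫ x : Fin m → ℝ in Set.univ.pi (fun _ => Set.Ioo (0:ℝ) 1),
      1 / (1 + ∏ i, x i))
    = (1 - 2 ^ ((1:ℝ) - m)) * ∑' n : ℕ, 1 / ((n:ℝ) + 1) ^ m := by
  have : Nonempty (Fin m) := ⟨⟨0, by omega⟩⟩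
  rw [setIntegral_congr_fun (MeasurableSet.univ_pi fun _ ↦ measurableSet_Ioo)
      fun _ ↦ one_div_one_add_prod_eq_tsum, ← tsum_neg_one_pow_div_nat_add_one_pow hm]
  simpa using (hasSum_setIntegral_neg_one_pow_mul_prod_pow
    (ι := Fin m) (by simpa using hm)).tsum_eq.symm
end

section
/- 2·Li₂(1/3) − Li₂(−1/3) = π²/6 − (1/2)·(log 3)². -/
/-!
Landen's identity `Li₂(x/(x-1)) + Li₂(x) = -½ log²(1-x)` holds on `[0, 1/2]` because both sides
vanish at `0` and, by `x · Li₂'(x) = Li₁(x) = -log(1-x)`, have the same derivative. Evaluating it at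
`x = 1/3, 1/4, 1/2` and combining with the duplication formula `Li₂(x) + Li₂(-x) = ½ Li₂(x²)` at
`x = 1/2, 1` and with `Li₂(1) = ζ(2) = π²/6` leaves a linear system whose solution is the claim.
-/

noncomputable def Li (s : ℕ) (w : ℝ) : ℝ := ∑' n : ℕ, w ^ (n + 1) / ((n:ℝ) + 1) ^ s

open Real Set

lemma summable_one_div_nat_succ_pow {s : ℕ} (hs : 2 ≤ s) :
    Summable (fun n : ℕ => 1 / ((n : ℝ) + 1) ^ s) := by
  simpa using (summable_nat_add_iff 1).mpr (Real.summable_one_div_nat_pow.mpr hs)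

lemma abs_pow_succ_div_le {s : ℕ} {x : ℝ} (hx : |x| ≤ 1) (n : ℕ) :
    |x ^ (n + 1) / ((n : ℝ) + 1) ^ s| ≤ 1 / ((n : ℝ) + 1) ^ s := by
  rw [abs_div, abs_of_pos (by positivity : (0 : ℝ) < ((n : ℝ) + 1) ^ s), abs_pow]
  gcongr
  exact pow_le_one₀ (abs_nonneg x) hx

lemma hasSum_Li {s : ℕ} (hs : 2 ≤ s) {x : ℝ} (hx : |x| ≤ 1) :
    HasSum (fun n : ℕ => x ^ (n + 1) / ((n : ℝ) + 1) ^ s) (Li s x) :=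
  (Summable.of_norm_bounded (summable_one_div_nat_succ_pow hs) (abs_pow_succ_div_le hx)).hasSum

lemma continuousOn_Li {s : ℕ} (hs : 2 ≤ s) : ContinuousOn (Li s) (Icc (-1) 1) :=
  continuousOn_tsum (fun n => (continuous_pow (n + 1)).continuousOn.div_const _)
    (summable_one_div_nat_succ_pow hs) fun _ _ hx => abs_pow_succ_div_le (abs_le.mpr hx) _

@[simp]
lemma Li_zero_right (s : ℕ) : Li s 0 = 0 := by
  simp [Li]

lemma Li_two_one : Li 2 1 = π ^ 2 / 6 := by
  have := (hasSum_nat_add_iff (f := fun n : ℕ => (1 : ℝ) / (n : ℝ) ^ 2) 1).mpr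
    (by simpa using hasSum_zeta_two)
  simpa [Li] using this.tsum_eq

lemma Li_one_eq_neg_log {x : ℝ} (hx : |x| < 1) : Li 1 x = -log (1 - x) := by
  simpa [Li] using (hasSum_pow_div_log_of_abs_lt_one hx).tsum_eq

lemma hasDerivAt_Li_succ (s : ℕ) {x : ℝ} (hx : |x| < 1) (hx0 : x ≠ 0) :
    HasDerivAt (Li (s + 1)) (Li s x / x) x := by
  obtain ⟨r, hxr, hr1⟩ := exists_between hx
  have hr0 : 0 < r := (abs_nonneg x).trans_lt hxr
  have hterm (n : ℕ) (y : ℝ) : HasDerivAt (fun z : ℝ => z ^ (n + 1) / ((n : ℝ) + 1) ^ (s + 1))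
      (y ^ n / ((n : ℝ) + 1) ^ s) y := by
    refine ((hasDerivAt_pow (n + 1) y).div_const _).congr_deriv ?_
    rw [Nat.add_sub_cancel, pow_succ]
    push_cast
    field_simp
  have hbound (n : ℕ) (y : ℝ) (hy : y ∈ Ioo (-r) r) : ‖y ^ n / ((n : ℝ) + 1) ^ s‖ ≤ r ^ n := by
    rw [norm_div, norm_pow, Real.norm_eq_abs, norm_of_nonneg (by positivity)]
    calc |y| ^ n / ((n : ℝ) + 1) ^ s ≤ |y| ^ n := div_le_self (by positivity) (one_le_pow₀ (by simp))
      _ ≤ r ^ n := pow_le_pow_left₀ (abs_nonneg y) (abs_le.mpr ⟨hy.1.le, hy.2.le⟩) n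
  have hseries : HasDerivAt (Li (s + 1)) (∑' n : ℕ, x ^ n / ((n : ℝ) + 1) ^ s) x :=
    hasDerivAt_tsum_of_isPreconnected (summable_geometric_of_lt_one hr0.le hr1) isOpen_Ioo
      isPreconnected_Ioo (fun n y _ => hterm n y) hbound (y₀ := 0) ⟨neg_neg_of_pos hr0, hr0⟩
      (by simp) (abs_lt.mp hxr)
  refine hseries.congr_deriv ?_
  rw [Li, ← tsum_div_const]
  congr 1 with n
  field_simp
  ring

lemma Li_add_Li_neg {s : ℕ} (hs : 2 ≤ s) {x : ℝ} (hx : |x| ≤ 1) :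
    Li s x + Li s (-x) = 2 / 2 ^ s * Li s (x ^ 2) := by
  set f : ℕ → ℝ := fun n => x ^ (n + 1) / ((n : ℝ) + 1) ^ s + (-x) ^ (n + 1) / ((n : ℝ) + 1) ^ s
  have hf : HasSum f (Li s x + Li s (-x)) :=
    (hasSum_Li hs hx).add (hasSum_Li hs (by rwa [abs_neg]))
  have heven : HasSum (fun k => f (2 * k)) 0 := by
    refine hasSum_zero.congr_fun fun k => ?_
    simp only [f, Odd.neg_pow ⟨k, rfl⟩]
    ring
  have hodd : HasSum (fun k => f (2 * k + 1)) (2 / 2 ^ s * Li s (x ^ 2)) := by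
    refine ((hasSum_Li hs (x := x ^ 2) (by simpa using hx)).mul_left _).congr_fun fun k => ?_
    have hk : 2 * k + 1 + 1 = 2 * (k + 1) := by ring
    simp only [f, hk, Even.neg_pow (even_two_mul _), pow_mul]
    rw [show (2 * k + 1 : ℕ) + (1 : ℝ) = 2 * ((k : ℝ) + 1) by push_cast; ring, mul_pow]
    field_simp
    ring
  simpa using hf.unique (heven.even_add_odd hodd)

lemma continuousOn_landen :
    ContinuousOn (fun x => Li 2 (x / (x - 1)) + Li 2 x + log (1 - x) ^ 2 / 2) (Icc 0 (1 / 2)) := by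
  have hmaps : MapsTo (fun x : ℝ => x / (x - 1)) (Icc 0 (1 / 2)) (Icc (-1) 1) := by
    intro x ⟨hx0, hx1⟩
    have hneg : x - 1 < 0 := by linarith
    exact ⟨(le_div_iff_of_neg hneg).mpr (by linarith),
      (div_nonpos_of_nonneg_of_nonpos hx0 hneg.le).trans zero_le_one⟩
  have hquot : ContinuousOn (fun x : ℝ => x / (x - 1)) (Icc 0 (1 / 2)) :=
    continuousOn_id.div (continuousOn_id.sub continuousOn_const) fun x hx =>
      (by linarith [hx.2] : x - 1 < 0).ne
  have hlog : ContinuousOn (fun x : ℝ => log (1 - x)) (Icc 0 (1 / 2)) :=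
    (continuousOn_const.sub continuousOn_id).log fun x hx =>
      (by linarith [hx.2] : 0 < 1 - x).ne'
  exact (((continuousOn_Li le_rfl).comp hquot hmaps).add ((continuousOn_Li le_rfl).mono
    (Icc_subset_Icc (by norm_num) (by norm_num)))).add ((hlog.pow 2).div_const 2)

lemma hasDerivAt_landen {x : ℝ} (hx : x ∈ Ioo 0 (1 / 2)) :
    HasDerivAt (fun x => Li 2 (x / (x - 1)) + Li 2 x + log (1 - x) ^ 2 / 2) 0 x := by
  obtain ⟨hx0, hx1⟩ := hx
  have hsub : x - 1 ≠ 0 := by linarith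
  have hpos : 0 < 1 - x := by linarith
  set u := x / (x - 1) with hu
  have hu0 : u ≠ 0 := div_ne_zero hx0.ne' hsub
  have hu1 : |u| < 1 := by
    rw [abs_div, abs_of_pos hx0, abs_of_neg (by linarith), div_lt_one (by linarith)]
    linarith
  have hlogu : Li 1 u = log (1 - x) := by
    rw [Li_one_eq_neg_log hu1, show 1 - u = (1 - x)⁻¹ by rw [hu]; field_simp; ring, log_inv, neg_neg]
  have hquot : HasDerivAt (fun x : ℝ => x / (x - 1)) (-1 / (x - 1) ^ 2) x := by
    refine ((hasDerivAt_id x).div ((hasDerivAt_id x).sub_const 1) hsub).congr_deriv ?_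
    simp only [id]
    ring
  have hlog : HasDerivAt (fun x : ℝ => log (1 - x)) (-1 / (1 - x)) x := by
    refine ((hasDerivAt_id x).const_sub 1).log hpos.ne' |>.congr_deriv ?_
    simp
  have h := (((hasDerivAt_Li_succ 1 hu1 hu0).comp x hquot).add
    (hasDerivAt_Li_succ 1 (abs_lt.mpr ⟨by linarith, by linarith⟩) hx0.ne')).add
    ((hlog.pow 2).div_const 2)
  refine h.congr_deriv ?_
  rw [hlogu, Li_one_eq_neg_log (abs_lt.mpr ⟨by linarith, by linarith⟩), hu]
  field_simp
  ring

lemma Li_two_div_sub_one_add_Li_two {x : ℝ} (hx : x ∈ Icc 0 (1 / 2)) :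
    Li 2 (x / (x - 1)) + Li 2 x = -(log (1 - x) ^ 2 / 2) := by
  rcases hx.1.eq_or_lt with rfl | hx0
  · simp
  obtain ⟨c, hc, hslope⟩ := exists_hasDerivAt_eq_slope _ (fun _ => 0) hx0
    (continuousOn_landen.mono (Icc_subset_Icc_right hx.2))
    fun c hc => hasDerivAt_landen ⟨hc.1, hc.2.trans_le hx.2⟩
  have hzero : Li 2 (x / (x - 1)) + Li 2 x + log (1 - x) ^ 2 / 2 = 0 := by
    simpa [hx0.ne'] using hslope.symm
  linarith

theorem Li2_third :
    2 * Li 2 (1/3) - Li 2 (-(1/3))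
    = Real.pi ^ 2 / 6 - (1/2) * (Real.log 3) ^ 2 := by
  have h1 := Li_two_div_sub_one_add_Li_two (x := 1/3) (by norm_num)
  have h2 := Li_two_div_sub_one_add_Li_two (x := 1/4) (by norm_num)
  have h3 := Li_two_div_sub_one_add_Li_two (x := 1/2) (by norm_num)
  have h4 := Li_add_Li_neg le_rfl (x := 1/2) (by norm_num [abs_le])
  have h5 := Li_add_Li_neg le_rfl (x := 1) (by norm_num)
  norm_num [Li_two_one] at h1 h2 h3 h4 h5
  have hlog2 : log (1 / 2) = -log 2 := by rw [one_div, log_inv]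
  have hlog3 : log (2 / 3) = log 2 - log 3 := log_div two_ne_zero three_ne_zero
  have hlog4 : log (3 / 4) = log 3 - 2 * log 2 := by
    rw [log_div three_ne_zero four_ne_zero, show (4 : ℝ) = 2 ^ 2 by norm_num, log_pow]
    push_cast
    ring
  rw [hlog2] at h3
  rw [hlog3] at h1
  rw [hlog4] at h2
  linear_combination 2 * h1 - h2 + 2 * h3 - 2 * h4 - 2 * h5
end
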